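/- Let F = {f₁,…,f_k} be an IFS of similarities on a complete metric space X with similarity factors c_i ∈ (0,1) and attractor K with diam(K) > 0, equipped with its natural fractal structure. Then the fractal dimension III of K, defined as dim³(K) = inf{s ≥ 0 : H^s_3(K) = 0} where H^s_3(K) = lim_{n→∞} inf{∑_{ω ∈ I^m} diam(f_ω(K))^s : m ≥ n}, equals the unique solution s of ∑_{i∈I} c_i^s = 1. No open set condition is required. -/

import Mathlib

open Metric Set Filter Topology MeasureTheory ENNReal NNReal

noncomputable section

/-- A map is a similarity with factor `c` if it scales all distances exactly by `c`. -/
def IsSimilarity {X : Type*} [MetricSpace X] (f : X → X) (c : ℝ) : Prop :=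
  ∀ x y, dist (f x) (f y) = c * dist x y

/-- Composition `f_{ω₁} ∘ ⋯ ∘ f_{ω_n}` of the maps of an IFS along a word `ω`. -/
def wordComp {X : Type*} {k : ℕ} (f : Fin k → X → X) {n : ℕ} (ω : Fin n → Fin k) : X → X :=
  (List.ofFn fun i => f (ω i)).foldr (· ∘ ·) id

/-- Number of elements of level `Γ_n` of the natural fractal structure (counted with
multiplicity over words) that meet `K`. -/
def levelCount {X : Type*} [MetricSpace X] {k : ℕ} (f : Fin k → X → X) (K : Set X)
    (n : ℕ) : ℕ :=
  Set.ncard {ω : Fin n → Fin k | ((wordComp f ω '' K) ∩ K).Nonempty}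

/-- `δ(K, Γ_n)`: supremum of diameters of the elements of level `Γ_n` meeting `K`. -/
def deltaLevel {X : Type*} [MetricSpace X] {k : ℕ} (f : Fin k → X → X) (K : Set X)
    (n : ℕ) : ℝ :=
  sSup {d : ℝ | ∃ ω : Fin n → Fin k, ((wordComp f ω '' K) ∩ K).Nonempty ∧
    d = Metric.diam (wordComp f ω '' K)}

/-- `N_δ(K)`: the largest number of disjoint closed balls of radius `δ` with centres in `K`. -/
def packingNum {X : Type*} [MetricSpace X] (K : Set X) (δ : ℝ) : ℕ :=
  sSup {m : ℕ | ∃ t : Finset X, t.card = m ∧ ↑t ⊆ K ∧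
    (t : Set X).Pairwise fun x y => Disjoint (Metric.closedBall x δ) (Metric.closedBall y δ)}

/-- The pre-measure `H^s_{n,3}(K)`: infimum over whole levels `m ≥ n` of the sum of the
`s`-th powers of the diameters of all elements of that level (with multiplicity). -/
def H3pre {X : Type*} [MetricSpace X] {k : ℕ} (f : Fin k → X → X) (K : Set X)
    (s : ℝ) (n : ℕ) : ℝ≥0∞ :=
  ⨅ m : {m : ℕ // n ≤ m}, ∑ ω : Fin m.1 → Fin k,
    ENNReal.ofReal (Metric.diam (wordComp f ω '' K)) ^ s

/-- `H^s_3(K)`: the (monotone) limit of `H^s_{n,3}(K)` as `n → ∞`. -/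
def H3 {X : Type*} [MetricSpace X] {k : ℕ} (f : Fin k → X → X) (K : Set X) (s : ℝ) : ℝ≥0∞ :=
  ⨆ n : ℕ, H3pre f K s n

/-- `H^s_4(K)`: limit over `n` of the infimum over finite covers of `K` by elements of
levels `≥ n` of the natural fractal structure. -/
def H4 {X : Type*} [MetricSpace X] {k : ℕ} (f : Fin k → X → X) (K : Set X) (s : ℝ) : ℝ≥0∞ :=
  ⨆ n : ℕ, ⨅ (𝒜 : Set (Set X)) (_ : 𝒜.Finite ∧
      (∀ A ∈ 𝒜, ∃ m, n ≤ m ∧ ∃ ω : Fin m → Fin k, A = wordComp f ω '' K) ∧ K ⊆ ⋃₀ 𝒜),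
    ∑' A : 𝒜, ENNReal.ofReal (Metric.diam (A : Set X)) ^ s

/-- `H^s_5(K)`: limit over `n` of the infimum over countable covers of `K` by elements of
levels `≥ n` of the natural fractal structure. -/
def H5 {X : Type*} [MetricSpace X] {k : ℕ} (f : Fin k → X → X) (K : Set X) (s : ℝ) : ℝ≥0∞ :=
  ⨆ n : ℕ, ⨅ (𝒜 : Set (Set X)) (_ : 𝒜.Countable ∧
      (∀ A ∈ 𝒜, ∃ m, n ≤ m ∧ ∃ ω : Fin m → Fin k, A = wordComp f ω '' K) ∧ K ⊆ ⋃₀ 𝒜),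
    ∑' A : 𝒜, ENNReal.ofReal (Metric.diam (A : Set X)) ^ s

/-- `H^s_6(K)`: limit as `δ → 0` of the infimum over countable covers of `K` by
fractal-structure elements of diameter at most `δ`. -/
def H6 {X : Type*} [MetricSpace X] {k : ℕ} (f : Fin k → X → X) (K : Set X) (s : ℝ) : ℝ≥0∞ :=
  ⨆ (δ : ℝ) (_ : 0 < δ), ⨅ (𝒜 : Set (Set X)) (_ : 𝒜.Countable ∧
      (∀ A ∈ 𝒜, (∃ m, ∃ ω : Fin m → Fin k, A = wordComp f ω '' K) ∧ Metric.diam A ≤ δ) ∧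
      K ⊆ ⋃₀ 𝒜),
    ∑' A : 𝒜, ENNReal.ofReal (Metric.diam (A : Set X)) ^ s

/-- The open set condition for a family of self-maps of `ℝ^d`. -/
def OSC {d k : ℕ} (f : Fin k → EuclideanSpace ℝ (Fin d) → EuclideanSpace ℝ (Fin d)) : Prop :=
  ∃ V : Set (EuclideanSpace ℝ (Fin d)), V.Nonempty ∧ IsOpen V ∧ Bornology.IsBounded V ∧
    (∀ i, f i '' V ⊆ V) ∧ Pairwise fun i j => Disjoint (f i '' V) (f j '' V)

/-!
For similarities the diameters of the pieces of the natural fractal structure are explicit: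
`diam (f_ω K) = c_{ω₁} ⋯ c_{ω_m} diam K`, so the whole level `Γ_m` contributes exactly
`(∑ cᵢ^t)^m (diam K)^t`. This tends to `0` when `∑ cᵢ^t < 1` and stays at least `(diam K)^t` when
`∑ cᵢ^t ≥ 1`; since `t ↦ ∑ cᵢ^t` is strictly decreasing, `H^t_3(K) = 0` exactly for `t > s`.
Overlaps between the pieces play no role, because level sums count words, not sets.
-/

namespace IsSimilarity

variable {X : Type*} [MetricSpace X]

lemma comp {f g : X → X} {a b : ℝ} (hf : IsSimilarity f a) (hg : IsSimilarity g b) :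
    IsSimilarity (f ∘ g) (a * b) := fun x y => by
  rw [Function.comp_apply, Function.comp_apply, hf, hg, mul_assoc]

lemma diam_image {g : X → X} {a : ℝ} (ha : 0 < a) (hg : IsSimilarity g a) (S : Set X) :
    diam (g '' S) = a * diam S := by
  rcases subsingleton_or_nontrivial X with hX | hX
  · rw [diam_subsingleton subsingleton_of_subsingleton,
      diam_subsingleton subsingleton_of_subsingleton, mul_zero]
  let d : X →ᵈ X := Dilation.mkOfDistEq g ⟨⟨a, ha.le⟩, NNReal.coe_ne_zero.1 ha.ne', hg⟩
  obtain ⟨x, y, hxy⟩ := exists_pair_ne X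
  have hratio : (⟨a, ha.le⟩ : NNReal) = Dilation.ratio d :=
    Dilation.ratio_unique_of_dist_ne_zero (dist_ne_zero.2 hxy) (hg x y)
  calc diam (g '' S) = Dilation.ratio d * diam S := Dilation.diam_image d S
    _ = a * diam S := by rw [← hratio]; rfl

end IsSimilarity

lemma wordComp_zero {X : Type*} {k : ℕ} (f : Fin k → X → X) (ω : Fin 0 → Fin k) :
    wordComp f ω = id := rfl

lemma wordComp_succ {X : Type*} {k : ℕ} (f : Fin k → X → X) {n : ℕ} (ω : Fin (n + 1) → Fin k) :
    wordComp f ω = f (ω 0) ∘ wordComp f (fun i => ω i.succ) := by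
  simp [wordComp, List.ofFn_succ]

section LevelSums

variable {X : Type*} [MetricSpace X] {k : ℕ} {f : Fin k → X → X} {c : Fin k → ℝ}

lemma IsSimilarity.wordComp (hf : ∀ i, IsSimilarity (f i) (c i)) {n : ℕ} (ω : Fin n → Fin k) :
    IsSimilarity (wordComp f ω) (∏ i, c (ω i)) := by
  induction n with
  | zero => simp [wordComp_zero, IsSimilarity]
  | succ n ih =>
    rw [wordComp_succ, Fin.prod_univ_succ]
    exact (hf _).comp (ih _)

lemma sum_diam_wordComp_image_rpow (hc : ∀ i, 0 < c i) (hf : ∀ i, IsSimilarity (f i) (c i))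
    (K : Set X) (t : ℝ) (m : ℕ) :
    ∑ ω : Fin m → Fin k, diam (wordComp f ω '' K) ^ t = (∑ i, c i ^ t) ^ m * diam K ^ t := by
  have hdiam (ω : Fin m → Fin k) :
      diam (wordComp f ω '' K) ^ t = (∏ i, c (ω i) ^ t) * diam K ^ t := by
    have hprod : 0 < ∏ i, c (ω i) := Finset.prod_pos fun i _ => hc _
    rw [(IsSimilarity.wordComp hf ω).diam_image hprod, Real.mul_rpow hprod.le diam_nonneg,
      Real.finsetProd_rpow _ _ fun i _ => (hc _).le]
  rw [Finset.sum_congr rfl fun ω _ => hdiam ω, ← Finset.sum_mul, Fintype.sum_pow]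

lemma sum_ofReal_diam_wordComp_image_rpow (hc : ∀ i, 0 < c i)
    (hf : ∀ i, IsSimilarity (f i) (c i)) (K : Set X) {t : ℝ} (ht : 0 ≤ t) (m : ℕ) :
    ∑ ω : Fin m → Fin k, ENNReal.ofReal (diam (wordComp f ω '' K)) ^ t =
      ENNReal.ofReal ((∑ i, c i ^ t) ^ m * diam K ^ t) := by
  rw [← sum_diam_wordComp_image_rpow hc hf K t m,
    ENNReal.ofReal_sum_of_nonneg fun ω _ => Real.rpow_nonneg diam_nonneg t]
  exact Finset.sum_congr rfl fun ω _ => ENNReal.ofReal_rpow_of_nonneg diam_nonneg ht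

lemma H3_eq_zero_of_sum_rpow_lt_one (hc : ∀ i, 0 < c i) (hf : ∀ i, IsSimilarity (f i) (c i))
    (K : Set X) {t : ℝ} (ht : 0 ≤ t) (hlt : ∑ i, c i ^ t < 1) : H3 f K t = 0 := by
  have hlevel : Tendsto (fun m => ENNReal.ofReal ((∑ i, c i ^ t) ^ m * diam K ^ t)) atTop (𝓝 0) := by
    have hr : 0 ≤ ∑ i, c i ^ t := Finset.sum_nonneg fun i _ => Real.rpow_nonneg (hc i).le t
    simpa using ENNReal.tendsto_ofReal
      ((tendsto_pow_atTop_nhds_zero_of_lt_one hr hlt).mul_const (diam K ^ t))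
  refine ENNReal.iSup_eq_zero.2 fun n => nonpos_iff_eq_zero.1 <| ge_of_tendsto hlevel ?_
  filter_upwards [eventually_ge_atTop n] with m hm
  rw [← sum_ofReal_diam_wordComp_image_rpow hc hf K ht m]
  exact iInf_le_of_le ⟨m, hm⟩ le_rfl

lemma ofReal_diam_rpow_le_H3 (hc : ∀ i, 0 < c i) (hf : ∀ i, IsSimilarity (f i) (c i))
    (K : Set X) {t : ℝ} (ht : 0 ≤ t) (hle : 1 ≤ ∑ i, c i ^ t) :
    ENNReal.ofReal (diam K ^ t) ≤ H3 f K t := by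
  refine le_iSup_of_le 0 <| le_iInf fun m => ?_
  rw [sum_ofReal_diam_wordComp_image_rpow hc hf K ht]
  exact ENNReal.ofReal_le_ofReal <|
    le_mul_of_one_le_left (Real.rpow_nonneg diam_nonneg t) (one_le_pow₀ hle)

end LevelSums

lemma strictAnti_sum_rpow {ι : Type*} {s : Finset ι} (hs : s.Nonempty) {c : ι → ℝ}
    (hc : ∀ i ∈ s, c i ∈ Ioo (0 : ℝ) 1) : StrictAnti fun t : ℝ => ∑ i ∈ s, c i ^ t :=
  fun _ _ htu => Finset.sum_lt_sum_of_nonempty hs fun i hi =>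
    Real.rpow_lt_rpow_of_exponent_gt (hc i hi).1 (hc i hi).2 htu

theorem dim3_eq_moran_root_general {X : Type*} [MetricSpace X]
    {k : ℕ} (f : Fin k → X → X) (c : Fin k → ℝ) (hc : ∀ i, c i ∈ Set.Ioo (0 : ℝ) 1)
    (hf : ∀ i, IsSimilarity (f i) (c i))
    (K : Set X)
    (hdiam : 0 < Metric.diam K)
    (s : ℝ) (hs : 0 ≤ s) (hsum : ∑ i, c i ^ s = 1) :
    sInf {t : ℝ | 0 ≤ t ∧ H3 f K t = 0} = s := by
  have hk : (Finset.univ : Finset (Fin k)).Nonempty :=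
    Finset.nonempty_of_sum_ne_zero (hsum ▸ one_ne_zero)
  have hanti := strictAnti_sum_rpow hk fun i _ => hc i
  have hc₀ i : 0 < c i := (hc i).1
  have hzero : {t : ℝ | 0 ≤ t ∧ H3 f K t = 0} = Ioi s := by
    ext t
    refine ⟨fun ⟨ht, hH3⟩ => mem_Ioi.2 <| lt_of_not_ge fun hts => ?_, fun hst => ?_⟩
    · have hbound := ofReal_diam_rpow_le_H3 hc₀ hf K ht (hsum ▸ hanti.antitone hts)
      rw [hH3, nonpos_iff_eq_zero, ENNReal.ofReal_eq_zero] at hbound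
      exact (Real.rpow_pos_of_pos hdiam t).not_ge hbound
    · exact ⟨hs.trans hst.le, H3_eq_zero_of_sum_rpow_lt_one hc₀ hf K (hs.trans hst.le)
        (hsum ▸ hanti hst)⟩
  rw [hzero, csInf_Ioi]

/-- generalized Moran theorem: without any open set condition, the fractal
dimension III of the attractor equals the unique solution `s` of `∑ cᵢ^s = 1`. -/
theorem dim3_eq_moran_root {X : Type*} [MetricSpace X] [CompleteSpace X]
    {k : ℕ} (f : Fin k → X → X) (c : Fin k → ℝ) (hc : ∀ i, c i ∈ Set.Ioo (0 : ℝ) 1)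
    (hf : ∀ i, IsSimilarity (f i) (c i))
    (K : Set X) (hne : K.Nonempty) (hcpt : IsCompact K) (hK : K = ⋃ i, f i '' K)
    (hdiam : 0 < Metric.diam K)
    (s : ℝ) (hs : 0 ≤ s) (hsum : ∑ i, c i ^ s = 1) :
    sInf {t : ℝ | 0 ≤ t ∧ H3 f K t = 0} = s :=
  dim3_eq_moran_root_general f c hc hf K hdiam s hs hsum
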